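/- arXiv:1910.00750 — 3 statements merged into one kernel-verified Lean document; each statement's English description precedes it below -/
import Mathlib

section
/- Let d ≥ 1, let p ≥ 2 be an integer and let r ∈ {1, …, p-1}. Let φ : ℝ^d → [0, ∞) be measurable with φ ∈ L^p(ℝ^d). Then lim_{R→∞} R^{-d} ∫_{B_R} ∫_{B_R} ∫_{B_R} φ(z₁)^r φ(z₂)^r φ(z₃)^{p-r} φ(z₂ - z₁ - z₃)^{p-r} dz₁ dz₂ dz₃ = 0. -/
/-!
Write `f = ‖φ‖ₑ`, `N = ∫ f ^ p` and `B = B_R`. Integrating first in `z₂`, Hölder's inequality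
with exponents `p / r`, `p / (p - r)` and translation invariance bound
`∫ f (z₂) ^ r f (z₂ - a) ^ (p - r) dz₂` by `N` uniformly in `a = z₁ + z₃`, so the triple integral
is at most `N (∫_B f ^ r) (∫_B f ^ (p - r))`. Hölder on `B` gives
`∫_B f ^ (p - r) ≤ N ^ ((p - r) / p) |B| ^ (r / p)`, while `∫_B f ^ r = o(|B| ^ ((p - r) / p))`:
from `f ^ r ≤ n ^ (p - r) f ^ p + min f n⁻¹ ^ r`, the first part has bounded integral and the
second is at most `(∫ min f n⁻¹ ^ p) ^ (r / p) |B| ^ ((p - r) / p)`, where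
`∫ min f n⁻¹ ^ p → 0` by dominated convergence. Hence the triple integral is `o(|B_R|) = o(R ^ d)`.
-/

open MeasureTheory Filter Metric
open scoped Topology ENNReal

lemma natCast_div_add_natCast_sub_div {e p : ℕ} (hep : e ≤ p) (hp : p ≠ 0) :
    (e : ℝ) / p + ((p - e : ℕ) : ℝ) / p = 1 := by
  rw [← add_div, Nat.cast_sub hep, add_sub_cancel, div_self (by exact_mod_cast hp)]

lemma ENNReal.rpow_div_natCast_pow (x : ℝ≥0∞) {p : ℕ} (hp : p ≠ 0) (e : ℕ) :
    (x ^ p) ^ ((e : ℝ) / p) = x ^ e := by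
  rw [← ENNReal.rpow_natCast x p, ← ENNReal.rpow_mul, mul_div_cancel₀ _ (by exact_mod_cast hp),
    ENNReal.rpow_natCast]

lemma ENNReal.mul_rpow_div_le_div_rpow (x y : ℝ≥0∞) {a b : ℝ} (ha : 0 < a) (hb : 0 ≤ b)
    (hab : a + b = 1) : y * x ^ a / x ≤ y / x ^ b := by
  rcases eq_or_ne x 0 with rfl | hx0
  · simp [ENNReal.zero_rpow_of_pos ha]
  rcases eq_or_ne x ∞ with rfl | hxt
  · simp
  refine le_of_eq ?_
  calc y * x ^ a / x = y * x ^ a / (x ^ b * x ^ a) := by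
        rw [← ENNReal.rpow_add_of_nonneg _ _ hb ha.le, add_comm, hab, ENNReal.rpow_one]
    _ = y / x ^ b := ENNReal.mul_div_mul_right _ _ (by simp [hx0, hxt]) (by simp [hx0, hxt])

section Lebesgue

variable {α : Type*} [MeasurableSpace α] {μ : Measure α}

lemma lintegral_pow_mul_pow_le {f g : α → ℝ≥0∞} (hf : AEMeasurable f μ) (hg : AEMeasurable g μ)
    {e p : ℕ} (hep : e ≤ p) (hp : p ≠ 0) :
    ∫⁻ x, f x ^ e * g x ^ (p - e) ∂μ ≤
      (∫⁻ x, f x ^ p ∂μ) ^ ((e : ℝ) / p) * (∫⁻ x, g x ^ p ∂μ) ^ (((p - e : ℕ) : ℝ) / p) := by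
  simpa only [ENNReal.rpow_div_natCast_pow _ hp] using
    ENNReal.lintegral_mul_norm_pow_le (hf.pow_const p) (hg.pow_const p) (by positivity)
      (by positivity) (natCast_div_add_natCast_sub_div hep hp)

lemma setLIntegral_pow_le {f : α → ℝ≥0∞} (hf : AEMeasurable f μ) {e p : ℕ} (hep : e ≤ p)
    (hp : p ≠ 0) (s : Set α) :
    ∫⁻ x in s, f x ^ e ∂μ ≤ (∫⁻ x, f x ^ p ∂μ) ^ ((e : ℝ) / p) * μ s ^ (((p - e : ℕ) : ℝ) / p) := by
  have h := lintegral_pow_mul_pow_le hf.restrict (aemeasurable_const (b := (1 : ℝ≥0∞))) hep hp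
    (μ := μ.restrict s)
  simp only [one_pow, mul_one, lintegral_one, Measure.restrict_apply_univ] at h
  exact h.trans (by gcongr; exact Measure.restrict_le_self)

lemma ENNReal.pow_le_natCast_pow_mul_pow_add_min_inv_pow (x : ℝ≥0∞) (n : ℕ) {e p : ℕ}
    (hep : e ≤ p) : x ^ e ≤ (n : ℝ≥0∞) ^ (p - e) * x ^ p + min x (n : ℝ≥0∞)⁻¹ ^ e := by
  rcases le_or_gt x (n : ℝ≥0∞)⁻¹ with hx | hx
  · rw [min_eq_left hx]
    exact le_add_self
  · have hnx : 1 ≤ (n : ℝ≥0∞) * x := by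
      refine (ENNReal.inv_le_iff_le_mul (fun _ hn => ?_) (by simp)).1 hx.le
      simp [hn] at hx
    calc x ^ e ≤ ((n : ℝ≥0∞) * x) ^ (p - e) * x ^ e := le_mul_of_one_le_left' (one_le_pow₀ hnx)
      _ = (n : ℝ≥0∞) ^ (p - e) * x ^ p := by
        rw [mul_pow, mul_assoc, ← pow_add, Nat.sub_add_cancel hep]
      _ ≤ _ := le_self_add

lemma tendsto_lintegral_min_inv_natCast_pow {f : α → ℝ≥0∞} (hf : AEMeasurable f μ) {p : ℕ}
    (hp : p ≠ 0) (hfp : ∫⁻ x, f x ^ p ∂μ ≠ ∞) :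
    Tendsto (fun n : ℕ => ∫⁻ x, min (f x) (n : ℝ≥0∞)⁻¹ ^ p ∂μ) atTop (𝓝 0) := by
  have hlim : ∀ x, Tendsto (fun n : ℕ => min (f x) (n : ℝ≥0∞)⁻¹ ^ p) atTop (𝓝 0) := fun x => by
    simpa [hp] using
      ENNReal.Tendsto.pow (n := p)
        ((tendsto_const_nhds (x := f x)).min ENNReal.tendsto_inv_nat_nhds_zero)
  simpa using tendsto_lintegral_of_dominated_convergence' (fun x => f x ^ p)
    (fun n => (hf.min aemeasurable_const).pow_const p)
    (fun n => ae_of_all _ fun x => pow_le_pow_left' (min_le_left _ _) p) hfp (ae_of_all _ hlim)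

lemma setLIntegral_pow_le_add {f : α → ℝ≥0∞} (hf : AEMeasurable f μ) {e p : ℕ} (hep : e ≤ p)
    (hp : p ≠ 0) (n : ℕ) (s : Set α) :
    ∫⁻ x in s, f x ^ e ∂μ ≤ (n : ℝ≥0∞) ^ (p - e) * ∫⁻ x, f x ^ p ∂μ +
      (∫⁻ x, min (f x) (n : ℝ≥0∞)⁻¹ ^ p ∂μ) ^ ((e : ℝ) / p) * μ s ^ (((p - e : ℕ) : ℝ) / p) :=
  calc ∫⁻ x in s, f x ^ e ∂μ
      ≤ ∫⁻ x in s, ((n : ℝ≥0∞) ^ (p - e) * f x ^ p + min (f x) (n : ℝ≥0∞)⁻¹ ^ e) ∂μ :=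
        lintegral_mono fun x => ENNReal.pow_le_natCast_pow_mul_pow_add_min_inv_pow _ n hep
    _ = (n : ℝ≥0∞) ^ (p - e) * (∫⁻ x in s, f x ^ p ∂μ) +
          ∫⁻ x in s, min (f x) (n : ℝ≥0∞)⁻¹ ^ e ∂μ := by
        rw [lintegral_add_left' ((hf.pow_const p).const_mul _).restrict,
          lintegral_const_mul' _ _ (by finiteness)]
    _ ≤ _ := add_le_add (mul_le_mul_right (setLIntegral_le_lintegral _ _) _)
        (setLIntegral_pow_le (hf.min aemeasurable_const) hep hp s)

lemma tendsto_setLIntegral_pow_div_measure_rpow {f : α → ℝ≥0∞} (hf : AEMeasurable f μ)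
    {e p : ℕ} (he : 0 < e) (hep : e < p) (hfp : ∫⁻ x, f x ^ p ∂μ ≠ ∞)
    {ι : Type*} {l : Filter ι} {s : ι → Set α} (hs : Tendsto (fun i => μ (s i)) l (𝓝 ∞)) :
    Tendsto (fun i => (∫⁻ x in s i, f x ^ e ∂μ) / μ (s i) ^ (((p - e : ℕ) : ℝ) / p)) l
      (𝓝 0) := by
  have hp : p ≠ 0 := by omega
  set b : ℝ := ((p - e : ℕ) : ℝ) / p
  have hb : 0 < b := div_pos (by exact_mod_cast Nat.sub_pos_of_lt hep) (by positivity)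
  have hsb : Tendsto (fun i => μ (s i) ^ b) l (𝓝 ∞) := by
    simpa [ENNReal.top_rpow_of_pos hb] using hs.ennrpow_const b
  have hsmall : Tendsto (fun n : ℕ => (∫⁻ x, min (f x) (n : ℝ≥0∞)⁻¹ ^ p ∂μ) ^ ((e : ℝ) / p))
      atTop (𝓝 0) := by
    simpa [ENNReal.zero_rpow_of_pos (show (0 : ℝ) < e / p by positivity)] using
      (tendsto_lintegral_min_inv_natCast_pow hf hp hfp).ennrpow_const ((e : ℝ) / p)
  rw [ENNReal.tendsto_nhds_zero]
  intro ε hε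
  have hε2 : 0 < ε / 2 := by simpa using hε.ne'
  obtain ⟨n, hn⟩ := (ENNReal.tendsto_nhds_zero.1 hsmall (ε / 2) hε2).exists
  set C := (n : ℝ≥0∞) ^ (p - e) * ∫⁻ x, f x ^ p ∂μ
  have hC : Tendsto (fun i => C / μ (s i) ^ b) l (𝓝 0) := by
    simpa using ENNReal.Tendsto.const_div hsb (.inr (by finiteness))
  filter_upwards [ENNReal.tendsto_nhds_zero.1 hC (ε / 2) hε2] with i hi
  calc (∫⁻ x in s i, f x ^ e ∂μ) / μ (s i) ^ b
      ≤ (C + ε / 2 * μ (s i) ^ b) / μ (s i) ^ b := by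
        gcongr
        exact (setLIntegral_pow_le_add hf hep.le hp n (s i)).trans (by gcongr)
    _ ≤ ε / 2 + ε / 2 := by
        rw [ENNReal.add_div, mul_div_assoc (ε / 2)]
        exact add_le_add hi (mul_le_of_le_one_right' ENNReal.div_self_le_one)
    _ = ε := ENNReal.add_halves ε

end Lebesgue

section AddCommGroup

variable {G : Type*} [AddCommGroup G] [MeasurableSpace G] [MeasurableSub₂ G] {μ : Measure G}

lemma lintegral_pow_mul_sub_pow_le [MeasurableAdd G] [μ.IsAddRightInvariant] {f : G → ℝ≥0∞}
    (hf : Measurable f) {e p : ℕ} (hep : e ≤ p) (hp : p ≠ 0) (a : G) :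
    ∫⁻ z, f z ^ e * f (z - a) ^ (p - e) ∂μ ≤ ∫⁻ z, f z ^ p ∂μ := by
  have h := lintegral_pow_mul_pow_le (μ := μ) (g := fun z => f (z - a)) hf.aemeasurable
    (hf.comp (measurable_sub_const a)).aemeasurable hep hp
  rwa [lintegral_sub_right_eq_self (fun z => f z ^ p) a, ← ENNReal.rpow_add_of_nonneg _ _
    (by positivity) (by positivity), natCast_div_add_natCast_sub_div hep hp,
    ENNReal.rpow_one] at h

lemma setLIntegral_triple_le_of_lintegral_mul_sub_le [SFinite μ] {g₁ g₂ g₃ g₄ : G → ℝ≥0∞}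
    (h₁ : Measurable g₁) (h₂ : Measurable g₂) (h₃ : Measurable g₃) (h₄ : Measurable g₄)
    {C : ℝ≥0∞} (hC : ∀ a, ∫⁻ z, g₂ z * g₄ (z - a) ∂μ ≤ C) (s : Set G) :
    ∫⁻ z₁ in s, ∫⁻ z₂ in s, ∫⁻ z₃ in s, g₁ z₁ * g₂ z₂ * g₃ z₃ * g₄ (z₂ - z₁ - z₃) ∂μ ∂μ ∂μ ≤
      (∫⁻ z in s, g₁ z ∂μ) * (∫⁻ z in s, g₃ z ∂μ) * C := by
  have hinner : ∀ z₁ z₃, ∫⁻ z₂ in s, g₁ z₁ * g₂ z₂ * g₃ z₃ * g₄ (z₂ - z₁ - z₃) ∂μ ≤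
      g₁ z₁ * g₃ z₃ * C := fun z₁ z₃ =>
    calc ∫⁻ z₂ in s, g₁ z₁ * g₂ z₂ * g₃ z₃ * g₄ (z₂ - z₁ - z₃) ∂μ
        = g₁ z₁ * g₃ z₃ * ∫⁻ z₂ in s, g₂ z₂ * g₄ (z₂ - (z₁ + z₃)) ∂μ := by
          rw [← lintegral_const_mul _ (by fun_prop)]
          exact lintegral_congr fun z₂ => by rw [sub_sub]; ring
      _ ≤ g₁ z₁ * g₃ z₃ * C := by
          gcongr
          exact (setLIntegral_le_lintegral _ _).trans (hC _)
  calc ∫⁻ z₁ in s, ∫⁻ z₂ in s, ∫⁻ z₃ in s, g₁ z₁ * g₂ z₂ * g₃ z₃ * g₄ (z₂ - z₁ - z₃) ∂μ ∂μ ∂μ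
      = ∫⁻ z₁ in s, ∫⁻ z₃ in s, ∫⁻ z₂ in s,
          g₁ z₁ * g₂ z₂ * g₃ z₃ * g₄ (z₂ - z₁ - z₃) ∂μ ∂μ ∂μ :=
        lintegral_congr fun z₁ => lintegral_lintegral_swap (by fun_prop)
    _ ≤ ∫⁻ z₁ in s, ∫⁻ z₃ in s, g₁ z₁ * g₃ z₃ * C ∂μ ∂μ :=
        lintegral_mono fun z₁ => lintegral_mono fun z₃ => hinner z₁ z₃
    _ = (∫⁻ z in s, g₁ z ∂μ) * (∫⁻ z in s, g₃ z ∂μ) * C := by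
        simp_rw [mul_assoc, lintegral_const_mul _ (h₃.mul_const C)]
        rw [lintegral_mul_const _ h₁, lintegral_mul_const _ h₃]

theorem tendsto_setLIntegral_triple_div_measure [MeasurableAdd G] [SFinite μ]
    [μ.IsAddRightInvariant] {f : G → ℝ≥0∞} (hf : Measurable f) {r p : ℕ} (hr : 0 < r)
    (hrp : r < p) (hfp : ∫⁻ x, f x ^ p ∂μ ≠ ∞) {ι : Type*} {l : Filter ι} {s : ι → Set G}
    (hs : Tendsto (fun i => μ (s i)) l (𝓝 ∞)) :
    Tendsto (fun i => (∫⁻ z₁ in s i, ∫⁻ z₂ in s i, ∫⁻ z₃ in s i,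
        f z₁ ^ r * f z₂ ^ r * f z₃ ^ (p - r) * f (z₂ - z₁ - z₃) ^ (p - r) ∂μ ∂μ ∂μ) / μ (s i))
      l (𝓝 0) := by
  have hp : p ≠ 0 := by omega
  set N := ∫⁻ x, f x ^ p ∂μ
  set K := N ^ (((p - r : ℕ) : ℝ) / p) * N
  have hK : K ≠ ∞ := by finiteness
  have hlim := ENNReal.Tendsto.const_mul
    (tendsto_setLIntegral_pow_div_measure_rpow hf.aemeasurable hr hrp hfp hs) (Or.inr hK)
  rw [mul_zero] at hlim
  refine tendsto_of_tendsto_of_tendsto_of_le_of_le tendsto_const_nhds hlim (fun _ => zero_le)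
    fun i => ?_
  set J := ∫⁻ z in s i, f z ^ r ∂μ
  set M := μ (s i)
  have hsub : ∫⁻ z in s i, f z ^ (p - r) ∂μ ≤ N ^ (((p - r : ℕ) : ℝ) / p) * M ^ ((r : ℝ) / p) := by
    simpa [Nat.sub_sub_self hrp.le] using
      setLIntegral_pow_le (μ := μ) hf.aemeasurable (Nat.sub_le p r) hp (s i)
  calc _ ≤ J * (∫⁻ z in s i, f z ^ (p - r) ∂μ) * N / M := by
        gcongr
        exact setLIntegral_triple_le_of_lintegral_mul_sub_le (hf.pow_const _) (hf.pow_const _)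
          (hf.pow_const _) (hf.pow_const _) (lintegral_pow_mul_sub_pow_le hf hrp.le hp) _
    _ ≤ J * (N ^ (((p - r : ℕ) : ℝ) / p) * M ^ ((r : ℝ) / p)) * N / M := by gcongr
    _ = K * J * M ^ ((r : ℝ) / p) / M := by
        congr 1
        simp only [K]
        ring
    _ ≤ K * (J / M ^ (((p - r : ℕ) : ℝ) / p)) := by
        rw [← mul_div_assoc]
        exact ENNReal.mul_rpow_div_le_div_rpow _ _ (by positivity) (by positivity)
          (natCast_div_add_natCast_sub_div hrp.le hp)

end AddCommGroup

section Balls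

variable {E : Type*} [NormedAddCommGroup E] [NormedSpace ℝ E] [FiniteDimensional ℝ E]
  [MeasurableSpace E] [BorelSpace E] (μ : Measure E) [μ.IsAddHaarMeasure]

open Module

lemma ofReal_rpow_neg_finrank_mul_addHaar_closedBall {R : ℝ} (hR : 0 < R) :
    ENNReal.ofReal (R ^ (-(finrank ℝ E : ℝ))) * μ (closedBall 0 R) = μ (ball 0 1) := by
  rw [Measure.addHaar_closedBall μ 0 hR.le, ← mul_assoc, ← ENNReal.ofReal_mul (by positivity),
    Real.rpow_neg hR.le, Real.rpow_natCast, inv_mul_cancel₀ (by positivity), ENNReal.ofReal_one,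
    one_mul]

lemma tendsto_addHaar_closedBall_atTop (hE : 0 < finrank ℝ E) :
    Tendsto (fun R : ℝ => μ (closedBall 0 R)) atTop (𝓝 ∞) := by
  have hball : μ (ball 0 1) ≠ 0 := (measure_ball_pos μ 0 one_pos).ne'
  have h : Tendsto (fun R : ℝ => ENNReal.ofReal (R ^ finrank ℝ E) * μ (ball 0 1)) atTop
      (𝓝 ∞) := by
    simpa [ENNReal.top_mul hball] using ENNReal.Tendsto.mul_const (b := μ (ball 0 1))
      (ENNReal.tendsto_ofReal_atTop.comp (tendsto_pow_atTop hE.ne'))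
      (Or.inl ENNReal.top_ne_zero)
  refine h.congr' ?_
  filter_upwards [eventually_ge_atTop 0] with R hR
  rw [Measure.addHaar_closedBall μ 0 hR]

theorem tendsto_ofReal_rpow_neg_finrank_mul_setLIntegral_triple (hE : 0 < finrank ℝ E)
    {f : E → ℝ≥0∞} (hf : Measurable f) {r p : ℕ} (hr : 0 < r) (hrp : r < p)
    (hfp : ∫⁻ x, f x ^ p ∂μ ≠ ∞) :
    Tendsto (fun R : ℝ => ENNReal.ofReal (R ^ (-(finrank ℝ E : ℝ))) *
        ∫⁻ z₁ in closedBall 0 R, ∫⁻ z₂ in closedBall 0 R, ∫⁻ z₃ in closedBall 0 R,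
          f z₁ ^ r * f z₂ ^ r * f z₃ ^ (p - r) * f (z₂ - z₁ - z₃) ^ (p - r) ∂μ ∂μ ∂μ)
      atTop (𝓝 0) := by
  have h := ENNReal.Tendsto.const_mul (a := μ (ball 0 1))
    (tendsto_setLIntegral_triple_div_measure hf hr hrp hfp
      (tendsto_addHaar_closedBall_atTop μ hE)) (Or.inr measure_ball_lt_top.ne)
  rw [mul_zero] at h
  refine h.congr' ?_
  filter_upwards [eventually_gt_atTop 0] with R hR
  rw [← ofReal_rpow_neg_finrank_mul_addHaar_closedBall μ hR, mul_assoc,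
    ENNReal.mul_div_cancel (measure_closedBall_pos μ 0 hR).ne' measure_closedBall_lt_top.ne]

end Balls

lemma enorm_integral_integral_integral_le {α β γ F : Type*} [MeasurableSpace α]
    [MeasurableSpace β] [MeasurableSpace γ] [NormedAddCommGroup F] [NormedSpace ℝ F]
    (μ : Measure α) (ν : Measure β) (ρ : Measure γ) (g : α → β → γ → F) :
    ‖∫ x, ∫ y, ∫ z, g x y z ∂ρ ∂ν ∂μ‖ₑ ≤ ∫⁻ x, ∫⁻ y, ∫⁻ z, ‖g x y z‖ₑ ∂ρ ∂ν ∂μ :=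
  (enorm_integral_le_lintegral_enorm _).trans <| lintegral_mono fun _ =>
    (enorm_integral_le_lintegral_enorm _).trans <| lintegral_mono fun _ =>
      enorm_integral_le_lintegral_enorm _

theorem stmt_9_general (d p r : ℕ) (hd : 1 ≤ d) (hr : 1 ≤ r) (hrp : r < p)
    (φ : EuclideanSpace ℝ (Fin d) → ℝ) (hmeas : Measurable φ)
    (hint : Integrable (fun x => φ x ^ p)) :
    Tendsto
      (fun R : ℝ => R ^ (-(d : ℝ)) *
        ∫ z₁ in closedBall (0 : EuclideanSpace ℝ (Fin d)) R,
          ∫ z₂ in closedBall (0 : EuclideanSpace ℝ (Fin d)) R,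
            ∫ z₃ in closedBall (0 : EuclideanSpace ℝ (Fin d)) R,
              φ z₁ ^ r * φ z₂ ^ r * φ z₃ ^ (p - r) * φ (z₂ - z₁ - z₃) ^ (p - r))
      atTop (𝓝 0) := by
  have hφp : ∫⁻ x, ‖φ x‖ₑ ^ p ≠ ∞ := by
    simpa only [enorm_pow] using hint.hasFiniteIntegral.ne
  have h := tendsto_ofReal_rpow_neg_finrank_mul_setLIntegral_triple volume
    (by rwa [finrank_euclideanSpace_fin]) hmeas.enorm hr hrp hφp
  rw [finrank_euclideanSpace_fin] at h
  rw [tendsto_zero_iff_enorm_tendsto_zero]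
  refine tendsto_of_tendsto_of_tendsto_of_le_of_le' tendsto_const_nhds h
    (.of_forall fun _ => zero_le) ?_
  filter_upwards [eventually_gt_atTop 0] with R hR
  rw [enorm_mul, Real.enorm_of_nonneg (by positivity)]
  gcongr
  exact (enorm_integral_integral_integral_le _ _ _ _).trans_eq
    (by simp only [enorm_mul, enorm_pow])

/-- For an integer `p ≥ 2`, `r ∈ {1,…,p-1}` and a nonnegative `φ ∈ L^p(ℝ^d)`,
`R^{-d} ∫_{B_R³} φ(z₁)^r φ(z₂)^r φ(z₃)^{p-r} φ(z₂-z₁-z₃)^{p-r} dz → 0` as `R → ∞`. -/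
theorem stmt_9 (d p r : ℕ) (hd : 1 ≤ d) (hp : 2 ≤ p) (hr : 1 ≤ r) (hrp : r < p)
    (φ : EuclideanSpace ℝ (Fin d) → ℝ) (hmeas : Measurable φ)
    (hpos : ∀ x, 0 ≤ φ x) (hint : Integrable (fun x => φ x ^ p)) :
    Tendsto
      (fun R : ℝ => R ^ (-(d : ℝ)) *
        ∫ z₁ in closedBall (0 : EuclideanSpace ℝ (Fin d)) R,
          ∫ z₂ in closedBall (0 : EuclideanSpace ℝ (Fin d)) R,
            ∫ z₃ in closedBall (0 : EuclideanSpace ℝ (Fin d)) R,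
              φ z₁ ^ r * φ z₂ ^ r * φ z₃ ^ (p - r) * φ (z₂ - z₁ - z₃) ^ (p - r))
      atTop (𝓝 0) :=
  stmt_9_general d p r hd hr hrp φ hmeas hint
end

section
/- Let d ≥ 1 and let γ : ℝ^d → [0, ∞) be integrable and even (γ(-x) = γ(x)). Let φ(ξ) = (2π)^{-d} ∫_{ℝ^d} γ(x) e^{-i x·ξ} dx (which is a real-valued bounded continuous function by evenness), and assume φ(ξ) ≥ 0 for all ξ ∈ ℝ^d. Then for every s > 0 and every x, y ∈ ℝ^d: (a) ∫_{ℝ^d} e^{-s‖η‖²} φ(η - x) φ(y - η) dη ≤ ∫_{ℝ^d} e^{-s‖η‖²} φ(η)² dη, and (b) ∫_{ℝ^d} e^{-s‖η‖²} φ(η - x) dη ≤ ∫_{ℝ^d} e^{-s‖η‖²} φ(η) dη. -/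
open MeasureTheory Real Function
open scoped InnerProductSpace

/-! Write `φ = c • Cγ` with the cosine transform `Cγ ξ = ∫ γ u cos ⟪u, ξ⟫ du`. After exchanging
integrals, the left-hand sides become integrals against `γ ≥ 0` (resp. `γ ⊗ γ`) of
`∫ w η cos (⟪u, η⟫ - a) dη` (resp. of the same with a product of two cosines, a sum of two such
terms by the product-to-sum formula), where `w` is the Gaussian weight and the phases `a` come
from the shifts `x, y`. Since `w` is even, `∫ w η cos (⟪u, η⟫ - a) dη = cos a * Cw u`, and
`Cw ≥ 0` because the cosine transform of a Gaussian is a Gaussian; so every phase can only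
decrease the integral. -/

variable {E : Type*} [NormedAddCommGroup E] [InnerProductSpace ℝ E] [MeasurableSpace E]

noncomputable def cosTransform (μ : Measure E) (f : E → ℝ) (ξ : E) : ℝ :=
  ∫ x, f x * cos ⟪x, ξ⟫_ℝ ∂μ

theorem cosTransform_neg (μ : Measure E) (f : E → ℝ) (ξ : E) :
    cosTransform μ f (-ξ) = cosTransform μ f ξ := by
  simp only [cosTransform, inner_neg_right, cos_neg]

theorem cosTransform_mul_cosTransform (ν : Measure E) [SFinite ν] (g : E → ℝ) (ξ ζ : E) :
    cosTransform ν g ξ * cosTransform ν g ζ =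
      ∫ p : E × E, g p.1 * g p.2 * (cos ⟪p.1, ξ⟫_ℝ * cos ⟪p.2, ζ⟫_ℝ) ∂ν.prod ν := by
  rw [cosTransform, cosTransform, ← integral_prod_mul]
  simp only [mul_mul_mul_comm]

theorem cosTransform_eq_re_integral [OpensMeasurableSpace E] {μ : Measure E} {f : E → ℝ}
    (hf : Integrable f μ) (ξ : E) :
    cosTransform μ f ξ = (∫ x, (f x : ℂ) * Complex.exp (-Complex.I * ⟪x, ξ⟫_ℝ) ∂μ).re := by
  have hint : Integrable (fun x => (f x : ℂ) * Complex.exp (-Complex.I * ⟪x, ξ⟫_ℝ)) μ :=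
    hf.ofReal.mul_bdd (by fun_prop : Continuous _).aestronglyMeasurable
      (c := 1) (ae_of_all _ fun x => by simp [Complex.norm_exp])
  rw [← RCLike.re_to_complex, ← integral_re hint, cosTransform]
  congr with x
  simp [Complex.exp_re]

section EvenWeight

variable [BorelSpace E] {μ : Measure E} [μ.IsNegInvariant] {w : E → ℝ}

theorem integral_mul_cos_inner_sub (hw : Integrable w μ) (hw_even : ∀ η, w (-η) = w η)
    (u : E) (a : ℝ) :
    ∫ η, w η * cos (⟪u, η⟫_ℝ - a) ∂μ = cos a * cosTransform μ w u := by
  have hcos : Integrable (fun η => w η * cos ⟪u, η⟫_ℝ) μ :=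
    hw.mul_bdd (by fun_prop : Continuous _).aestronglyMeasurable (c := 1)
      (ae_of_all _ fun _ => abs_cos_le_one _)
  have hsin : Integrable (fun η => w η * sin ⟪u, η⟫_ℝ) μ :=
    hw.mul_bdd (by fun_prop : Continuous _).aestronglyMeasurable (c := 1)
      (ae_of_all _ fun _ => abs_sin_le_one _)
  have hsin_zero : ∫ η, w η * sin ⟪u, η⟫_ℝ ∂μ = 0 := by
    have h := integral_neg_eq_self (fun η => w η * sin ⟪u, η⟫_ℝ) μ
    simp only [hw_even, inner_neg_right, sin_neg, mul_neg, integral_neg] at h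
    linarith
  calc ∫ η, w η * cos (⟪u, η⟫_ℝ - a) ∂μ
      = ∫ η, cos a * (w η * cos ⟪u, η⟫_ℝ) + sin a * (w η * sin ⟪u, η⟫_ℝ) ∂μ := by
        congr with η; rw [cos_sub]; ring
    _ = cos a * cosTransform μ w u := by
        rw [integral_add (hcos.const_mul _) (hsin.const_mul _), integral_const_mul,
          integral_const_mul, hsin_zero, cosTransform]
        simp only [real_inner_comm u, mul_zero, add_zero]

theorem integral_mul_cos_inner_sub_le (hw : Integrable w μ) (hw_even : ∀ η, w (-η) = w η)
    (hW : ∀ u, 0 ≤ cosTransform μ w u) (u : E) (a : ℝ) :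
    ∫ η, w η * cos (⟪u, η⟫_ℝ - a) ∂μ ≤ ∫ η, w η * cos ⟪u, η⟫_ℝ ∂μ := by
  have h₀ := integral_mul_cos_inner_sub hw hw_even u 0
  simp only [sub_zero, cos_zero, one_mul] at h₀
  rw [integral_mul_cos_inner_sub hw hw_even, h₀]
  exact mul_le_of_le_one_left (hW u) (cos_le_one a)

theorem integral_mul_cos_mul_cos (hw : Integrable w μ) (hw_even : ∀ η, w (-η) = w η)
    (u v : E) (a b : ℝ) :
    ∫ η, w η * (cos (⟪u, η⟫_ℝ - a) * cos (⟪v, η⟫_ℝ - b)) ∂μ =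
      (cos (a + b) * cosTransform μ w (u + v) + cos (a - b) * cosTransform μ w (u - v)) / 2 := by
  have hcos : ∀ (z : E) (c : ℝ), Integrable (fun η => w η * cos (⟪z, η⟫_ℝ - c)) μ :=
    fun z c => hw.mul_bdd (by fun_prop : Continuous _).aestronglyMeasurable (c := 1)
      (ae_of_all _ fun _ => abs_cos_le_one _)
  calc ∫ η, w η * (cos (⟪u, η⟫_ℝ - a) * cos (⟪v, η⟫_ℝ - b)) ∂μ
      = (∫ η, w η * cos (⟪u + v, η⟫_ℝ - (a + b)) +
          w η * cos (⟪u - v, η⟫_ℝ - (a - b)) ∂μ) / 2 := by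
        rw [← integral_div]
        congr with η
        have hadd : ⟪u + v, η⟫_ℝ - (a + b) = (⟪u, η⟫_ℝ - a) + (⟪v, η⟫_ℝ - b) := by
          rw [inner_add_left]; ring
        have hsub : ⟪u - v, η⟫_ℝ - (a - b) = (⟪u, η⟫_ℝ - a) - (⟪v, η⟫_ℝ - b) := by
          rw [inner_sub_left]; ring
        rw [hadd, hsub, ← mul_add, add_comm, ← two_mul_cos_mul_cos]
        ring
    _ = _ := by
        rw [integral_add (hcos _ _) (hcos _ _), integral_mul_cos_inner_sub hw hw_even,
          integral_mul_cos_inner_sub hw hw_even]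

theorem integral_mul_cos_mul_cos_le (hw : Integrable w μ) (hw_even : ∀ η, w (-η) = w η)
    (hW : ∀ u, 0 ≤ cosTransform μ w u) (u v : E) (a b : ℝ) :
    ∫ η, w η * (cos (⟪u, η⟫_ℝ - a) * cos (⟪v, η⟫_ℝ - b)) ∂μ ≤
      ∫ η, w η * (cos ⟪u, η⟫_ℝ * cos ⟪v, η⟫_ℝ) ∂μ := by
  have h₀ := integral_mul_cos_mul_cos hw hw_even u v 0 0
  simp only [sub_zero, add_zero, cos_zero, one_mul] at h₀
  rw [integral_mul_cos_mul_cos hw hw_even, h₀]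
  gcongr <;> exact mul_le_of_le_one_left (hW _) (cos_le_one _)

end EvenWeight

section Fubini

variable {α β : Type*} [MeasurableSpace α] [MeasurableSpace β] {μ : Measure α} {ν : Measure β}
  {w : α → ℝ} {g : β → ℝ}

theorem integrable_mul_mul_of_abs_le_one (hw : Integrable w μ) (hg : Integrable g ν)
    {F : α → β → ℝ} (hFm : AEStronglyMeasurable (uncurry F) (μ.prod ν))
    (hF : ∀ η u, |F η u| ≤ 1) :
    Integrable (uncurry fun η u => g u * (w η * F η u)) (μ.prod ν) := by
  refine ((hw.mul_prod hg).mul_bdd hFm (c := 1) (ae_of_all _ fun z => hF z.1 z.2)).congr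
    (ae_of_all _ fun ⟨η, u⟩ => ?_)
  simp only [uncurry_apply_pair]
  ring

variable [SFinite μ] [SFinite ν]

theorem integral_mul_integral_mul_comm (hw : Integrable w μ) (hg : Integrable g ν)
    {F : α → β → ℝ} (hFm : AEStronglyMeasurable (uncurry F) (μ.prod ν))
    (hF : ∀ η u, |F η u| ≤ 1) :
    ∫ η, w η * ∫ u, g u * F η u ∂ν ∂μ = ∫ u, g u * ∫ η, w η * F η u ∂μ ∂ν := by
  simp only [← integral_const_mul, mul_left_comm (w _)]
  exact integral_integral_swap (integrable_mul_mul_of_abs_le_one hw hg hFm hF)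

theorem integral_mul_integral_mul_mono (hw : Integrable w μ) (hg : Integrable g ν)
    (hg0 : ∀ u, 0 ≤ g u) {F G : α → β → ℝ}
    (hFm : AEStronglyMeasurable (uncurry F) (μ.prod ν)) (hF : ∀ η u, |F η u| ≤ 1)
    (hGm : AEStronglyMeasurable (uncurry G) (μ.prod ν)) (hG : ∀ η u, |G η u| ≤ 1)
    (hFG : ∀ u, ∫ η, w η * F η u ∂μ ≤ ∫ η, w η * G η u ∂μ) :
    ∫ η, w η * ∫ u, g u * F η u ∂ν ∂μ ≤ ∫ η, w η * ∫ u, g u * G η u ∂ν ∂μ := by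
  rw [integral_mul_integral_mul_comm hw hg hFm hF, integral_mul_integral_mul_comm hw hg hGm hG]
  refine integral_mono ?_ ?_ fun u => mul_le_mul_of_nonneg_left (hFG u) (hg0 u)
  · simpa only [uncurry_apply_pair, integral_const_mul] using
      (integrable_mul_mul_of_abs_le_one hw hg hFm hF).integral_prod_right
  · simpa only [uncurry_apply_pair, integral_const_mul] using
      (integrable_mul_mul_of_abs_le_one hw hg hGm hG).integral_prod_right

end Fubini

section ShiftedCosTransform

variable [BorelSpace E] [SecondCountableTopology E] {μ ν : Measure E} [μ.IsNegInvariant]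
  [SFinite μ] [SFinite ν] {w g : E → ℝ}

theorem integral_mul_cosTransform_sub_le (hw : Integrable w μ) (hw_even : ∀ η, w (-η) = w η)
    (hW : ∀ u, 0 ≤ cosTransform μ w u) (hg : Integrable g ν) (hg0 : ∀ u, 0 ≤ g u) (x : E) :
    ∫ η, w η * cosTransform ν g (η - x) ∂μ ≤ ∫ η, w η * cosTransform ν g η ∂μ :=
  integral_mul_integral_mul_mono hw hg hg0
    (by fun_prop : Continuous fun z : E × E => cos ⟪z.2, z.1 - x⟫_ℝ).aestronglyMeasurable
    (fun _ _ => abs_cos_le_one _)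
    (by fun_prop : Continuous fun z : E × E => cos ⟪z.2, z.1⟫_ℝ).aestronglyMeasurable
    (fun _ _ => abs_cos_le_one _)
    fun u => by simpa only [inner_sub_right] using integral_mul_cos_inner_sub_le hw hw_even hW u _

theorem integral_mul_cosTransform_sub_mul_le (hw : Integrable w μ)
    (hw_even : ∀ η, w (-η) = w η) (hW : ∀ u, 0 ≤ cosTransform μ w u) (hg : Integrable g ν)
    (hg0 : ∀ u, 0 ≤ g u) (x y : E) :
    ∫ η, w η * (cosTransform ν g (η - x) * cosTransform ν g (y - η)) ∂μ ≤
      ∫ η, w η * cosTransform ν g η ^ 2 ∂μ := by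
  have hbound : ∀ s t : ℝ, |cos s * cos t| ≤ 1 := fun s t => by
    rw [abs_mul]
    exact mul_le_one₀ (abs_cos_le_one _) (abs_nonneg _) (abs_cos_le_one _)
  simp only [← neg_sub _ y, cosTransform_neg, sq, cosTransform_mul_cosTransform]
  exact integral_mul_integral_mul_mono hw (hg.mul_prod hg) (fun p => mul_nonneg (hg0 _) (hg0 _))
    (by fun_prop : Continuous fun z : E × (E × E) =>
      cos ⟪z.2.1, z.1 - x⟫_ℝ * cos ⟪z.2.2, z.1 - y⟫_ℝ).aestronglyMeasurable
    (fun _ _ => hbound _ _)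
    (by fun_prop : Continuous fun z : E × (E × E) =>
      cos ⟪z.2.1, z.1⟫_ℝ * cos ⟪z.2.2, z.1⟫_ℝ).aestronglyMeasurable
    (fun _ _ => hbound _ _)
    fun p => by
      simpa only [inner_sub_right] using integral_mul_cos_mul_cos_le hw hw_even hW p.1 p.2 _ _

end ShiftedCosTransform

section Gaussian

variable {V : Type*} [NormedAddCommGroup V] [InnerProductSpace ℝ V] [FiniteDimensional ℝ V]
  [MeasurableSpace V] [BorelSpace V] {s : ℝ}

theorem integrable_exp_neg_mul_sq_norm (hs : 0 < s) :
    Integrable (fun η : V => exp (-s * ‖η‖ ^ 2)) := by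
  refine (GaussianFourier.integrable_cexp_neg_mul_sq_norm_add (b := s) (by simpa using hs) 0
    (0 : V)).norm.congr (ae_of_all _ fun η => ?_)
  simp [Complex.norm_exp, ← Complex.ofReal_pow]

theorem cosTransform_exp_neg_mul_sq_norm (hs : 0 < s) (u : V) :
    cosTransform volume (fun η : V => exp (-s * ‖η‖ ^ 2)) u =
      (π / s) ^ (Module.finrank ℝ V / 2 : ℝ) * exp (-‖u‖ ^ 2 / (4 * s)) := by
  rw [cosTransform_eq_re_integral (integrable_exp_neg_mul_sq_norm hs)]
  have h := GaussianFourier.integral_cexp_neg_mul_sq_norm_add (b := s) (by simpa using hs)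
    (-Complex.I) u
  have hpow : ((π : ℂ) / s) ^ (Module.finrank ℝ V / 2 : ℂ) =
      (((π / s) ^ (Module.finrank ℝ V / 2 : ℝ) : ℝ) : ℂ) := by
    rw [Complex.ofReal_cpow (by positivity)]
    push_cast
    rfl
  have hexp : (-Complex.I) ^ 2 * (‖u‖ : ℂ) ^ 2 / (4 * s) = ((-‖u‖ ^ 2 / (4 * s) : ℝ) : ℂ) := by
    rw [neg_sq, Complex.I_sq]
    push_cast
    ring
  simp only [Complex.ofReal_exp, ← Complex.exp_add, real_inner_comm u]
  push_cast
  simp only [neg_mul] at h ⊢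
  rw [h, hpow, hexp, ← Complex.ofReal_exp, ← Complex.ofReal_mul, Complex.ofReal_re]

end Gaussian

theorem stmt_15_general (d : ℕ)
    (γ : EuclideanSpace ℝ (Fin d) → ℝ) (hγint : Integrable γ)
    (hγ0 : ∀ x, 0 ≤ γ x) :
    let φ : EuclideanSpace ℝ (Fin d) → ℝ := fun ξ =>
      (2 * Real.pi) ^ (-(d : ℝ)) *
        (∫ x, (γ x : ℂ) * Complex.exp (-Complex.I * ((inner ℝ x ξ : ℝ) : ℂ))).re
    (∀ ξ, 0 ≤ φ ξ) →
      ∀ s : ℝ, 0 < s → ∀ x y : EuclideanSpace ℝ (Fin d),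
        (∫ η, Real.exp (-s * ‖η‖ ^ 2) * φ (η - x) * φ (y - η) ≤
          ∫ η, Real.exp (-s * ‖η‖ ^ 2) * φ η ^ 2) ∧
        (∫ η, Real.exp (-s * ‖η‖ ^ 2) * φ (η - x) ≤
          ∫ η, Real.exp (-s * ‖η‖ ^ 2) * φ η) := by
  intro φ _ s hs x y
  set c : ℝ := (2 * π) ^ (-(d : ℝ))
  have hφ : ∀ ξ, φ ξ = c * cosTransform volume γ ξ := fun ξ => by
    rw [cosTransform_eq_re_integral hγint]
  have hG := integrable_exp_neg_mul_sq_norm (V := EuclideanSpace ℝ (Fin d)) hs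
  have hG_even : ∀ η : EuclideanSpace ℝ (Fin d), exp (-s * ‖-η‖ ^ 2) = exp (-s * ‖η‖ ^ 2) := by
    simp only [norm_neg, implies_true]
  have hGW : ∀ u : EuclideanSpace ℝ (Fin d),
      0 ≤ cosTransform volume (fun η => exp (-s * ‖η‖ ^ 2)) u := fun u => by
    rw [cosTransform_exp_neg_mul_sq_norm hs]
    positivity
  simp only [hφ]
  constructor
  · calc ∫ η, exp (-s * ‖η‖ ^ 2) * (c * cosTransform volume γ (η - x)) *
          (c * cosTransform volume γ (y - η))
        = c ^ 2 * ∫ η, exp (-s * ‖η‖ ^ 2) *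
            (cosTransform volume γ (η - x) * cosTransform volume γ (y - η)) := by
          rw [← integral_const_mul]; congr with η; ring
      _ ≤ c ^ 2 * ∫ η, exp (-s * ‖η‖ ^ 2) * cosTransform volume γ η ^ 2 :=
          mul_le_mul_of_nonneg_left
            (integral_mul_cosTransform_sub_mul_le hG hG_even hGW hγint hγ0 x y) (by positivity)
      _ = ∫ η, exp (-s * ‖η‖ ^ 2) * (c * cosTransform volume γ η) ^ 2 := by
          rw [← integral_const_mul]; congr with η; ring
  · calc ∫ η, exp (-s * ‖η‖ ^ 2) * (c * cosTransform volume γ (η - x))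
        = c * ∫ η, exp (-s * ‖η‖ ^ 2) * cosTransform volume γ (η - x) := by
          rw [← integral_const_mul]; congr with η; ring
      _ ≤ c * ∫ η, exp (-s * ‖η‖ ^ 2) * cosTransform volume γ η :=
          mul_le_mul_of_nonneg_left
            (integral_mul_cosTransform_sub_le hG hG_even hGW hγint hγ0 x) (by positivity)
      _ = ∫ η, exp (-s * ‖η‖ ^ 2) * (c * cosTransform volume γ η) := by
          rw [← integral_const_mul]; congr with η; ring

/-- Let `γ : ℝ^d → [0,∞)` be integrable and even, and let
`φ(ξ) = (2π)^{-d} ∫ γ(x) e^{-i x·ξ} dx` (real-valued by evenness; here its real part).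
If `φ ≥ 0`, then for every `s > 0` and `x, y ∈ ℝ^d`:
(a) `∫ e^{-s‖η‖²} φ(η-x) φ(y-η) dη ≤ ∫ e^{-s‖η‖²} φ(η)² dη`, and
(b) `∫ e^{-s‖η‖²} φ(η-x) dη ≤ ∫ e^{-s‖η‖²} φ(η) dη`. -/
theorem stmt_15 (d : ℕ) (hd : 1 ≤ d)
    (γ : EuclideanSpace ℝ (Fin d) → ℝ) (hγint : Integrable γ)
    (hγ0 : ∀ x, 0 ≤ γ x) (hγeven : ∀ x, γ (-x) = γ x) :
    let φ : EuclideanSpace ℝ (Fin d) → ℝ := fun ξ =>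
      (2 * Real.pi) ^ (-(d : ℝ)) *
        (∫ x, (γ x : ℂ) * Complex.exp (-Complex.I * ((inner ℝ x ξ : ℝ) : ℂ))).re
    (∀ ξ, 0 ≤ φ ξ) →
      ∀ s : ℝ, 0 < s → ∀ x y : EuclideanSpace ℝ (Fin d),
        (∫ η, Real.exp (-s * ‖η‖ ^ 2) * φ (η - x) * φ (y - η) ≤
          ∫ η, Real.exp (-s * ‖η‖ ^ 2) * φ η ^ 2) ∧
        (∫ η, Real.exp (-s * ‖η‖ ^ 2) * φ (η - x) ≤
          ∫ η, Real.exp (-s * ‖η‖ ^ 2) * φ η) :=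
  stmt_15_general d γ hγint hγ0
end

section
/- Let d ≥ 1 and let m ≥ 1 be an integer. Let γ : ℝ^d → ℝ be measurable with |γ(x)| ≤ K for almost every x (for some finite constant K > 0) and γ ∈ L^m(ℝ^d). Let (f_p)_{p ≥ m} be a sequence with f_p ∈ L¹(ℝ^{pd}) for each p, satisfying ∑_{p ≥ m} p! K^p ‖f_p‖_{L¹(ℝ^{pd})}² < ∞. Then ∑_{p ≥ m} p! ∫_{ℝ^d} ∫_{ℝ^{pd}} ∫_{ℝ^{pd}} |f_p(s₁,…,s_p)| |f_p(t₁,…,t_p)| ∏_{i=1}^p |γ(t_i - s_i + z)| ds dt dz < ∞. -/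
open MeasureTheory Filter Metric
open scoped Topology ENNReal

private lemma prod_le_sum_pow_aux {n : ℕ} (hn : 1 ≤ n) (x : Fin n → ℝ) (hx : ∀ i, 0 ≤ x i) :
    ∏ i, x i ≤ ∑ i, x i ^ n := by
  have hne : (Finset.univ : Finset (Fin n)).Nonempty := by
    have : Nonempty (Fin n) := ⟨⟨0, hn⟩⟩
    exact Finset.univ_nonempty
  obtain ⟨j, -, hj⟩ := Finset.exists_max_image Finset.univ x hne
  calc ∏ i, x i ≤ ∏ _i : Fin n, x j :=
        Finset.prod_le_prod (fun i _ => hx i) (fun i _ => hj i (Finset.mem_univ i))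
    _ = x j ^ n := by rw [Finset.prod_const, Finset.card_univ, Fintype.card_fin]
    _ ≤ ∑ i, x i ^ n :=
        Finset.single_le_sum (fun i _ => pow_nonneg (hx i) n) (Finset.mem_univ j)

/-- If `γ` is a.e. bounded by `K`, `γ ∈ L^m(ℝ^d)`, and kernels `f_p ∈ L¹(ℝ^{pd})`
satisfy `∑_{p ≥ m} p! K^p ‖f_p‖₁² < ∞`, then
`∑_{p ≥ m} p! ∫_{ℝ^d}∫∫ |f_p(s)||f_p(t)| ∏_i |γ(t_i - s_i + z)| ds dt dz < ∞`. -/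
theorem stmt_17 (d m : ℕ) (hd : 1 ≤ d) (hm : 1 ≤ m)
    (γ : EuclideanSpace ℝ (Fin d) → ℝ) (hγm : Measurable γ)
    (K : ℝ) (hK : 0 < K)
    (hbd : ∀ᵐ x : EuclideanSpace ℝ (Fin d), |γ x| ≤ K)
    (hγLm : Integrable (fun x => |γ x| ^ m))
    (f : (p : ℕ) → (Fin p → EuclideanSpace ℝ (Fin d)) → ℝ)
    (hfint : ∀ p, m ≤ p → Integrable (f p))
    (hsum : Summable (fun k : ℕ =>
      ((m + k).factorial : ℝ) * K ^ (m + k) *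
        (∫ s : Fin (m + k) → EuclideanSpace ℝ (Fin d), |f (m + k) s|) ^ 2)) :
    (∑' k : ℕ, ((m + k).factorial : ℝ≥0∞) *
      ∫⁻ z : EuclideanSpace ℝ (Fin d),
        ∫⁻ s : Fin (m + k) → EuclideanSpace ℝ (Fin d),
          ∫⁻ t : Fin (m + k) → EuclideanSpace ℝ (Fin d),
            ENNReal.ofReal
              (|f (m + k) s| * |f (m + k) t| * ∏ i, |γ (t i - s i + z)|)) < ⊤ := by
  set Iγ : ℝ≥0∞ := ∫⁻ x : (EuclideanSpace ℝ (Fin d)), ENNReal.ofReal (|γ x| ^ m) with hIγdef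
  have hIγ_top : Iγ < ⊤ := by
    have h := hγLm.hasFiniteIntegral
    rw [hasFiniteIntegral_iff_norm] at h
    refine lt_of_le_of_lt (le_of_eq ?_) h
    refine lintegral_congr fun x => ?_
    rw [Real.norm_of_nonneg (pow_nonneg (abs_nonneg _) _)]
  -- per-term bound
  have key : ∀ k : ℕ,
      ((m + k).factorial : ℝ≥0∞) *
        (∫⁻ z : (EuclideanSpace ℝ (Fin d)), ∫⁻ s : Fin (m + k) → (EuclideanSpace ℝ (Fin d)), ∫⁻ t : Fin (m + k) → (EuclideanSpace ℝ (Fin d)),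
          ENNReal.ofReal
            (|f (m + k) s| * |f (m + k) t| * ∏ i, |γ (t i - s i + z)|)) ≤
      ENNReal.ofReal (((m + k).factorial : ℝ) * K ^ k *
          (∫ s : Fin (m + k) → (EuclideanSpace ℝ (Fin d)), |f (m + k) s|) ^ 2) * ((m : ℝ≥0∞) * Iγ) := by
    intro k
    set p := m + k with hp
    have hfi : Integrable (f p) := hfint p (Nat.le_add_right m k)
    have hg0 : AEMeasurable (f p) := hfi.aestronglyMeasurable.aemeasurable
    set g := hg0.mk (f p) with hgdef
    have hgm : Measurable g := hg0.measurable_mk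
    have hge : f p =ᵐ[volume] g := hg0.ae_eq_mk
    set B : ℝ≥0∞ := ENNReal.ofReal (K ^ k) * ((m : ℝ≥0∞) * Iγ) with hB
    -- measurability of γ-product integrand in z for fixed s t
    have hγz : ∀ (s t : Fin p → (EuclideanSpace ℝ (Fin d))),
        Measurable fun z : (EuclideanSpace ℝ (Fin d)) => ENNReal.ofReal (∏ i, |γ (t i - s i + z)|) := by
      intro s t
      refine Measurable.ennreal_ofReal ?_
      exact Finset.measurable_prod Finset.univ fun i _ =>
        (hγm.comp (measurable_const.add measurable_id)).abs
    -- z-integral bound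
    have hzb : ∀ (s t : Fin p → (EuclideanSpace ℝ (Fin d))),
        ∫⁻ z : (EuclideanSpace ℝ (Fin d)), ENNReal.ofReal (∏ i, |γ (t i - s i + z)|) ≤ B := by
      intro s t
      have hae : ∀ᵐ z : (EuclideanSpace ℝ (Fin d)), ∀ i : Fin p, |γ (t i - s i + z)| ≤ K := by
        rw [MeasureTheory.ae_all_iff]
        intro i
        exact (measurePreserving_add_left volume (t i - s i)).quasiMeasurePreserving.ae hbd
      have hptwise : ∀ᵐ z : (EuclideanSpace ℝ (Fin d)), ENNReal.ofReal (∏ i, |γ (t i - s i + z)|) ≤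
          ENNReal.ofReal (K ^ k) * ∑ i : Fin m, ENNReal.ofReal
            (|γ (t (Fin.castAdd k i) - s (Fin.castAdd k i) + z)| ^ m) := by
        filter_upwards [hae] with z hz
        have h1 : ∏ i, |γ (t i - s i + z)| =
            (∏ i : Fin m, |γ (t (Fin.castAdd k i) - s (Fin.castAdd k i) + z)|) *
            ∏ i : Fin k, |γ (t (Fin.natAdd m i) - s (Fin.natAdd m i) + z)| :=
          Fin.prod_univ_add _
        have h2 : (∏ i : Fin k, |γ (t (Fin.natAdd m i) - s (Fin.natAdd m i) + z)|) ≤ K ^ k := by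
          calc (∏ i : Fin k, |γ (t (Fin.natAdd m i) - s (Fin.natAdd m i) + z)|)
              ≤ ∏ _i : Fin k, K :=
                Finset.prod_le_prod (fun i _ => abs_nonneg _) (fun i _ => hz _)
            _ = K ^ k := by rw [Finset.prod_const, Finset.card_univ, Fintype.card_fin]
        have h3 : (∏ i : Fin m, |γ (t (Fin.castAdd k i) - s (Fin.castAdd k i) + z)|) ≤
            ∑ i : Fin m, |γ (t (Fin.castAdd k i) - s (Fin.castAdd k i) + z)| ^ m :=
          prod_le_sum_pow_aux hm _ (fun i => abs_nonneg _)
        have h4 : ∏ i, |γ (t i - s i + z)| ≤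
            K ^ k * ∑ i : Fin m,
              |γ (t (Fin.castAdd k i) - s (Fin.castAdd k i) + z)| ^ m := by
          rw [h1, mul_comm]
          exact mul_le_mul h2 h3 (Finset.prod_nonneg fun i _ => abs_nonneg _)
            (pow_nonneg hK.le k)
        calc ENNReal.ofReal (∏ i, |γ (t i - s i + z)|)
            ≤ ENNReal.ofReal (K ^ k * ∑ i : Fin m,
                |γ (t (Fin.castAdd k i) - s (Fin.castAdd k i) + z)| ^ m) :=
              ENNReal.ofReal_le_ofReal h4
          _ = ENNReal.ofReal (K ^ k) * ∑ i : Fin m, ENNReal.ofReal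
                (|γ (t (Fin.castAdd k i) - s (Fin.castAdd k i) + z)| ^ m) := by
              rw [ENNReal.ofReal_mul (pow_nonneg hK.le k),
                ENNReal.ofReal_sum_of_nonneg
                  (fun i _ => pow_nonneg (abs_nonneg _) m)]
      have hmeasi : ∀ i : Fin m, Measurable fun z : (EuclideanSpace ℝ (Fin d)) => ENNReal.ofReal
          (|γ (t (Fin.castAdd k i) - s (Fin.castAdd k i) + z)| ^ m) := by
        intro i
        exact (((hγm.comp (measurable_const.add measurable_id)).abs.pow_const m)).ennreal_ofReal
      calc ∫⁻ z : (EuclideanSpace ℝ (Fin d)), ENNReal.ofReal (∏ i, |γ (t i - s i + z)|)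
          ≤ ∫⁻ z : (EuclideanSpace ℝ (Fin d)), ENNReal.ofReal (K ^ k) * ∑ i : Fin m, ENNReal.ofReal
              (|γ (t (Fin.castAdd k i) - s (Fin.castAdd k i) + z)| ^ m) :=
            lintegral_mono_ae hptwise
        _ = ENNReal.ofReal (K ^ k) * ∑ i : Fin m, ∫⁻ z : (EuclideanSpace ℝ (Fin d)), ENNReal.ofReal
              (|γ (t (Fin.castAdd k i) - s (Fin.castAdd k i) + z)| ^ m) := by
            rw [lintegral_const_mul _ (Finset.measurable_sum Finset.univ fun i _ => hmeasi i),
              lintegral_finset_sum _ (fun i _ => hmeasi i)]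
        _ = ENNReal.ofReal (K ^ k) * ∑ _i : Fin m, Iγ := by
            congr 1
            refine Finset.sum_congr rfl fun i _ => ?_
            exact (measurePreserving_add_left volume
              (t (Fin.castAdd k i) - s (Fin.castAdd k i))).lintegral_comp
              ((hγm.abs.pow_const m).ennreal_ofReal)
        _ = B := by
            rw [Finset.sum_const, Finset.card_univ, Fintype.card_fin, nsmul_eq_mul]
    -- replace f by its measurable representative g
    have hrepl : (∫⁻ z : (EuclideanSpace ℝ (Fin d)), ∫⁻ s : Fin p → (EuclideanSpace ℝ (Fin d)), ∫⁻ t : Fin p → (EuclideanSpace ℝ (Fin d)),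
        ENNReal.ofReal (|f p s| * |f p t| * ∏ i, |γ (t i - s i + z)|)) =
        ∫⁻ z : (EuclideanSpace ℝ (Fin d)), ∫⁻ s : Fin p → (EuclideanSpace ℝ (Fin d)), ∫⁻ t : Fin p → (EuclideanSpace ℝ (Fin d)),
        ENNReal.ofReal (|g s| * |g t| * ∏ i, |γ (t i - s i + z)|) := by
      refine lintegral_congr fun z => ?_
      refine lintegral_congr_ae ?_
      filter_upwards [hge] with s hs
      refine lintegral_congr_ae ?_
      filter_upwards [hge] with t ht
      rw [hs, ht]
    -- joint measurability
    have hcore : Measurable fun w : ((EuclideanSpace ℝ (Fin d)) × (Fin p → (EuclideanSpace ℝ (Fin d)))) × (Fin p → (EuclideanSpace ℝ (Fin d))) =>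
        ENNReal.ofReal (|g w.1.2| * |g w.2| * ∏ i, |γ (w.2 i - w.1.2 i + w.1.1)|) := by
      refine Measurable.ennreal_ofReal ?_
      refine ((hgm.comp (measurable_snd.comp measurable_fst)).abs.mul
        (hgm.comp measurable_snd).abs).mul ?_
      refine Finset.measurable_prod Finset.univ fun i _ => ?_
      have hmw : Measurable fun w : ((EuclideanSpace ℝ (Fin d)) × (Fin p → (EuclideanSpace ℝ (Fin d)))) × (Fin p → (EuclideanSpace ℝ (Fin d))) =>
          w.2 i - w.1.2 i + w.1.1 := by fun_prop
      exact (hγm.comp hmw).abs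
    have hcore2 : ∀ s : Fin p → (EuclideanSpace ℝ (Fin d)), Measurable fun w : (EuclideanSpace ℝ (Fin d)) × (Fin p → (EuclideanSpace ℝ (Fin d))) =>
        ENNReal.ofReal (|g s| * |g w.2| * ∏ i, |γ (w.2 i - s i + w.1)|) := by
      intro s
      have hmap : Measurable fun w : (EuclideanSpace ℝ (Fin d)) × (Fin p → (EuclideanSpace ℝ (Fin d))) => ((w.1, s), w.2) :=
        (measurable_fst.prodMk measurable_const).prodMk measurable_snd
      exact hcore.comp hmap
    -- Tonelli swaps
    have hswap : (∫⁻ z : (EuclideanSpace ℝ (Fin d)), ∫⁻ s : Fin p → (EuclideanSpace ℝ (Fin d)), ∫⁻ t : Fin p → (EuclideanSpace ℝ (Fin d)),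
        ENNReal.ofReal (|g s| * |g t| * ∏ i, |γ (t i - s i + z)|)) =
        ∫⁻ s : Fin p → (EuclideanSpace ℝ (Fin d)), ∫⁻ t : Fin p → (EuclideanSpace ℝ (Fin d)), ∫⁻ z : (EuclideanSpace ℝ (Fin d)),
        ENNReal.ofReal (|g s| * |g t| * ∏ i, |γ (t i - s i + z)|) := by
      calc (∫⁻ z : (EuclideanSpace ℝ (Fin d)), ∫⁻ s : Fin p → (EuclideanSpace ℝ (Fin d)), ∫⁻ t : Fin p → (EuclideanSpace ℝ (Fin d)),
          ENNReal.ofReal (|g s| * |g t| * ∏ i, |γ (t i - s i + z)|)) =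
          ∫⁻ s : Fin p → (EuclideanSpace ℝ (Fin d)), ∫⁻ z : (EuclideanSpace ℝ (Fin d)), ∫⁻ t : Fin p → (EuclideanSpace ℝ (Fin d)),
          ENNReal.ofReal (|g s| * |g t| * ∏ i, |γ (t i - s i + z)|) :=
            lintegral_lintegral_swap (hcore.lintegral_prod_right'.aemeasurable)
        _ = _ := lintegral_congr fun s =>
            lintegral_lintegral_swap ((hcore2 s).aemeasurable)
    set Ig : ℝ≥0∞ := ∫⁻ s : Fin p → (EuclideanSpace ℝ (Fin d)), ENNReal.ofReal |g s| with hIgdef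
    have hIg : Ig = ENNReal.ofReal (∫ s : Fin p → (EuclideanSpace ℝ (Fin d)), |f p s|) := by
      have h1 : Ig = ∫⁻ s : Fin p → (EuclideanSpace ℝ (Fin d)), ENNReal.ofReal |f p s| := by
        refine lintegral_congr_ae ?_
        filter_upwards [hge] with s hs
        rw [hs]
      rw [h1, ← ofReal_integral_eq_lintegral_ofReal hfi.abs
        (Eventually.of_forall fun s => abs_nonneg _)]
    have hbound : (∫⁻ s : Fin p → (EuclideanSpace ℝ (Fin d)), ∫⁻ t : Fin p → (EuclideanSpace ℝ (Fin d)), ∫⁻ z : (EuclideanSpace ℝ (Fin d)),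
        ENNReal.ofReal (|g s| * |g t| * ∏ i, |γ (t i - s i + z)|)) ≤ Ig * (Ig * B) := by
      calc (∫⁻ s : Fin p → (EuclideanSpace ℝ (Fin d)), ∫⁻ t : Fin p → (EuclideanSpace ℝ (Fin d)), ∫⁻ z : (EuclideanSpace ℝ (Fin d)),
          ENNReal.ofReal (|g s| * |g t| * ∏ i, |γ (t i - s i + z)|))
          ≤ ∫⁻ s : Fin p → (EuclideanSpace ℝ (Fin d)), ∫⁻ t : Fin p → (EuclideanSpace ℝ (Fin d)),
            ENNReal.ofReal |g s| * (ENNReal.ofReal |g t| * B) := by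
            refine lintegral_mono fun s => lintegral_mono fun t => ?_
            have heq : ∀ z : (EuclideanSpace ℝ (Fin d)), ENNReal.ofReal (|g s| * |g t| * ∏ i, |γ (t i - s i + z)|) =
                (ENNReal.ofReal |g s| * ENNReal.ofReal |g t|) *
                  ENNReal.ofReal (∏ i, |γ (t i - s i + z)|) := fun z => by
              rw [ENNReal.ofReal_mul (mul_nonneg (abs_nonneg _) (abs_nonneg _)),
                ENNReal.ofReal_mul (abs_nonneg _)]
            calc (∫⁻ z : (EuclideanSpace ℝ (Fin d)), ENNReal.ofReal (|g s| * |g t| * ∏ i, |γ (t i - s i + z)|))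
                = (ENNReal.ofReal |g s| * ENNReal.ofReal |g t|) *
                    ∫⁻ z : (EuclideanSpace ℝ (Fin d)), ENNReal.ofReal (∏ i, |γ (t i - s i + z)|) := by
                  simp_rw [heq]
                  exact lintegral_const_mul _ (hγz s t)
              _ ≤ (ENNReal.ofReal |g s| * ENNReal.ofReal |g t|) * B :=
                  mul_le_mul_right (hzb s t) _
              _ = ENNReal.ofReal |g s| * (ENNReal.ofReal |g t| * B) := by ring
        _ = ∫⁻ s : Fin p → (EuclideanSpace ℝ (Fin d)), ENNReal.ofReal |g s| * (Ig * B) := by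
            refine lintegral_congr fun s => ?_
            rw [lintegral_const_mul _ ((hgm.abs.ennreal_ofReal).mul_const B),
              lintegral_mul_const _ hgm.abs.ennreal_ofReal]
        _ = Ig * (Ig * B) := lintegral_mul_const _ hgm.abs.ennreal_ofReal
    -- assemble
    have hA : (0:ℝ) ≤ ∫ s : Fin p → (EuclideanSpace ℝ (Fin d)), |f p s| := integral_nonneg fun s => abs_nonneg _
    calc ((p).factorial : ℝ≥0∞) *
        (∫⁻ z : (EuclideanSpace ℝ (Fin d)), ∫⁻ s : Fin p → (EuclideanSpace ℝ (Fin d)), ∫⁻ t : Fin p → (EuclideanSpace ℝ (Fin d)),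
          ENNReal.ofReal (|f p s| * |f p t| * ∏ i, |γ (t i - s i + z)|))
        ≤ ((p).factorial : ℝ≥0∞) * (Ig * (Ig * B)) := by
          rw [hrepl, hswap]; exact mul_le_mul_right hbound _
      _ = ENNReal.ofReal ((p).factorial * K ^ k *
            (∫ s : Fin p → (EuclideanSpace ℝ (Fin d)), |f p s|) ^ 2) * ((m : ℝ≥0∞) * Iγ) := by
          have hofr : ENNReal.ofReal (((p).factorial : ℝ) * K ^ k *
              (∫ s : Fin p → (EuclideanSpace ℝ (Fin d)), |f p s|) ^ 2) =
              ((p).factorial : ℝ≥0∞) *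
              ENNReal.ofReal (∫ s : Fin p → (EuclideanSpace ℝ (Fin d)), |f p s|) *
              ENNReal.ofReal (∫ s : Fin p → (EuclideanSpace ℝ (Fin d)), |f p s|) *
              ENNReal.ofReal (K ^ k) := by
            rw [show ((p).factorial : ℝ) * K ^ k *
                (∫ s : Fin p → (EuclideanSpace ℝ (Fin d)), |f p s|) ^ 2 =
                ((p).factorial : ℝ) * (∫ s : Fin p → (EuclideanSpace ℝ (Fin d)), |f p s|) *
                (∫ s : Fin p → (EuclideanSpace ℝ (Fin d)), |f p s|) * K ^ k by ring,
              ENNReal.ofReal_mul (mul_nonneg (mul_nonneg (Nat.cast_nonneg _) hA) hA),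
              ENNReal.ofReal_mul (mul_nonneg (Nat.cast_nonneg _) hA),
              ENNReal.ofReal_mul (Nat.cast_nonneg _), ENNReal.ofReal_natCast]
          rw [hIg, hB, hofr]
          ring
  -- sum the bounds
  set b : ℕ → ℝ := fun k => ((m + k).factorial : ℝ) * K ^ k *
    (∫ s : Fin (m + k) → (EuclideanSpace ℝ (Fin d)), |f (m + k) s|) ^ 2 with hbdef
  have hbnn : ∀ k, 0 ≤ b k := fun k =>
    mul_nonneg (mul_nonneg (Nat.cast_nonneg _) (pow_nonneg hK.le k)) (sq_nonneg _)
  have hbsum : Summable b := by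
    have h := hsum.mul_left ((K ^ m)⁻¹)
    refine h.congr fun k => ?_
    simp only [hbdef]
    rw [pow_add]
    field_simp
  calc (∑' k : ℕ, ((m + k).factorial : ℝ≥0∞) *
      ∫⁻ z : (EuclideanSpace ℝ (Fin d)), ∫⁻ s : Fin (m + k) → (EuclideanSpace ℝ (Fin d)), ∫⁻ t : Fin (m + k) → (EuclideanSpace ℝ (Fin d)),
        ENNReal.ofReal (|f (m + k) s| * |f (m + k) t| * ∏ i, |γ (t i - s i + z)|))
      ≤ ∑' k : ℕ, ENNReal.ofReal (b k) * ((m : ℝ≥0∞) * Iγ) :=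
        ENNReal.tsum_le_tsum fun k => key k
    _ = ENNReal.ofReal (∑' k, b k) * ((m : ℝ≥0∞) * Iγ) := by
        rw [ENNReal.tsum_mul_right, ENNReal.ofReal_tsum_of_nonneg hbnn hbsum]
    _ < ⊤ := by
        refine ENNReal.mul_lt_top ENNReal.ofReal_lt_top ?_
        exact ENNReal.mul_lt_top (ENNReal.natCast_lt_top m) hIγ_top
end
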